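/- In the frame 𝔉(b) constructed from a complete tableau branch b, if σ T □_i φ appears in b and σ R_i τ in 𝔉(b), then τ T φ appears in b. -/

import Mathlib

namespace JL

/-- Justification terms. -/
inductive Tm : Type
  | const : ℕ → Tm
  | var : ℕ → Tm
  | app : Tm → Tm → Tm
  | sum : Tm → Tm → Tm
  | bang : Tm → Tm
deriving DecidableEq

/-- Formulas of the language L_n with n agents. -/
inductive Fml (n : ℕ) : Type
  | bot : Fml n
  | atom : ℕ → Fml n
  | imp : Fml n → Fml n → Fml n
  | just : Fin n → Tm → Fml n → Fml n
deriving DecidableEq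

/-- Axioms of (J^n_{D,F,V,C}). -/
inductive IsAxiom {n : ℕ} (D F : Set (Fin n)) (V C : Set (Fin n × Fin n)) : Fml n → Prop
  | pK (φ ψ : Fml n) : IsAxiom D F V C (.imp φ (.imp ψ φ))
  | pS (φ ψ χ : Fml n) :
      IsAxiom D F V C (.imp (.imp φ (.imp ψ χ)) (.imp (.imp φ ψ) (.imp φ χ)))
  | pDNE (φ : Fml n) : IsAxiom D F V C (.imp (.imp (.imp φ .bot) .bot) φ)
  | appAx (i : Fin n) (s t : Tm) (φ ψ : Fml n) :
      IsAxiom D F V C (.imp (.just i s (.imp φ ψ)) (.imp (.just i t φ) (.just i (.app s t) ψ)))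
  | sumL (i : Fin n) (s t : Tm) (φ : Fml n) :
      IsAxiom D F V C (.imp (.just i s φ) (.just i (.sum s t) φ))
  | sumR (i : Fin n) (s t : Tm) (φ : Fml n) :
      IsAxiom D F V C (.imp (.just i s φ) (.just i (.sum t s) φ))
  | fact (i : Fin n) (t : Tm) (φ : Fml n) (hi : i ∈ F) :
      IsAxiom D F V C (.imp (.just i t φ) φ)
  | cons (i : Fin n) (t : Tm) (hi : i ∈ D) :
      IsAxiom D F V C (.imp (.just i t .bot) .bot)
  | ver (i j : Fin n) (t : Tm) (φ : Fml n) (h : (i, j) ∈ V) :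
      IsAxiom D F V C (.imp (.just i t φ) (.just j (.bang t) (.just i t φ)))
  | conv (i j : Fin n) (t : Tm) (φ : Fml n) (h : (i, j) ∈ C) :
      IsAxiom D F V C (.imp (.just i t φ) (.just j t φ))

/-- CS is a constant specification: each element justifies an axiom by a constant. -/
def ConstSpec {n : ℕ} (D F : Set (Fin n)) (V C : Set (Fin n × Fin n))
    (CS : Set (Fin n × Tm × Fml n)) : Prop :=
  ∀ e ∈ CS, (∃ c, e.2.1 = Tm.const c) ∧ IsAxiom D F V C e.2.2

/-- cl_n(CS): closure of CS under bang. -/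
inductive Cl {n : ℕ} (CS : Set (Fin n × Tm × Fml n)) : Fin n → Tm → Fml n → Prop
  | base {i : Fin n} {t : Tm} {φ : Fml n} : (i, t, φ) ∈ CS → Cl CS i t φ
  | bang {i : Fin n} {t : Tm} {φ : Fml n} (j : Fin n) :
      Cl CS i t φ → Cl CS j (.bang t) (.just i t φ)

/-- Hilbert-style derivability in (J^n_{D,F,V,C})_CS. -/
inductive Provable {n : ℕ} (D F : Set (Fin n)) (V C : Set (Fin n × Fin n))
    (CS : Set (Fin n × Tm × Fml n)) : Fml n → Prop
  | ax {φ : Fml n} : IsAxiom D F V C φ → Provable D F V C CS φ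
  | cs {i : Fin n} {t : Tm} {φ : Fml n} : Cl CS i t φ → Provable D F V C CS (.just i t φ)
  | mp {φ ψ : Fml n} : Provable D F V C CS (.imp φ ψ) → Provable D F V C CS φ →
      Provable D F V C CS ψ

/-- An F-model for (J^n_{D,F,V,C})_CS. -/
structure Model (n : ℕ) (D F : Set (Fin n)) (V C : Set (Fin n × Fin n))
    (CS : Set (Fin n × Tm × Fml n)) where
  W : Type
  ne : Nonempty W
  R : Fin n → W → W → Prop
  A : Fin n → Tm → Fml n → Set W
  val : ℕ → Set W
  appClosure : ∀ (i : Fin n) (s t : Tm) (φ ψ : Fml n),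
    A i s (.imp φ ψ) ∩ A i t φ ⊆ A i (.app s t) ψ
  sumClosure : ∀ (i : Fin n) (s t : Tm) (φ : Fml n),
    A i t φ ∪ A i s φ ⊆ A i (.sum t s) φ
  csClosure : ∀ (i : Fin n) (t : Tm) (φ : Fml n), Cl CS i t φ → A i t φ = Set.univ
  vClosure : ∀ (i j : Fin n) (t : Tm) (φ : Fml n), (i, j) ∈ V →
    A i t φ ⊆ A j (.bang t) (.just i t φ)
  cClosure : ∀ (i j : Fin n) (t : Tm) (φ : Fml n), (i, j) ∈ C → A i t φ ⊆ A j t φ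
  vDis : ∀ (i j : Fin n) (t : Tm) (φ : Fml n) (a b : W), (i, j) ∈ V →
    R j a b → a ∈ A i t φ → b ∈ A i t φ
  refl : ∀ i ∈ F, ∀ a : W, R i a a
  serial : ∀ i ∈ D, ∀ a : W, ∃ b : W, R i a b
  vTrans : ∀ (i j : Fin n), (i, j) ∈ V → ∀ a b c : W, R j a b → R i b c → R i a c
  cSub : ∀ (i j : Fin n), (i, j) ∈ C → ∀ a b : W, R j a b → R i a b

/-- Truth in an F-model. -/
def Sat {n : ℕ} {D F : Set (Fin n)} {V C : Set (Fin n × Fin n)}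
    {CS : Set (Fin n × Tm × Fml n)} (M : Model n D F V C CS) : M.W → Fml n → Prop
  | _, .bot => False
  | a, .atom p => a ∈ M.val p
  | a, .imp φ ψ => Sat M a φ → Sat M a ψ
  | a, .just i t φ => a ∈ M.A i t φ ∧ ∀ b : M.W, M.R i a b → Sat M b φ

/-- A frame for (J^n_{D,F,V,C}). -/
structure Frame (n : ℕ) (D F : Set (Fin n)) (V C : Set (Fin n × Fin n)) where
  W : Type
  ne : Nonempty W
  R : Fin n → W → W → Prop
  refl : ∀ i ∈ F, ∀ a : W, R i a a
  serial : ∀ i ∈ D, ∀ a : W, ∃ b : W, R i a b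
  vTrans : ∀ (i j : Fin n), (i, j) ∈ V → ∀ a b c : W, R j a b → R i b c → R i a c
  cSub : ∀ (i j : Fin n), (i, j) ∈ C → ∀ a b : W, R j a b → R i a b

/-- The *-calculus *^F_CS(V,C) on a frame with accessibility relations R,
deriving world-prefixed star expressions from a set S of premises. -/
inductive StarDeriv {n : ℕ} (V C : Set (Fin n × Fin n)) (CS : Set (Fin n × Tm × Fml n))
    {W : Type} (R : Fin n → W → W → Prop) (S : Set (W × Fin n × Tm × Fml n)) :
    W → Fin n → Tm → Fml n → Prop
  | prem {w i t φ} : (w, i, t, φ) ∈ S → StarDeriv V C CS R S w i t φ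
  | csAx {w i t φ} : Cl CS i t φ → StarDeriv V C CS R S w i t φ
  | app {w i s t φ ψ} : StarDeriv V C CS R S w i s (.imp φ ψ) →
      StarDeriv V C CS R S w i t φ → StarDeriv V C CS R S w i (.app s t) ψ
  | sumL {w i s t φ} : StarDeriv V C CS R S w i t φ →
      StarDeriv V C CS R S w i (.sum s t) φ
  | sumR {w i s t φ} : StarDeriv V C CS R S w i s φ →
      StarDeriv V C CS R S w i (.sum s t) φ
  | v {w i j t φ} : (i, j) ∈ V → StarDeriv V C CS R S w i t φ →
      StarDeriv V C CS R S w j (.bang t) (.just i t φ)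
  | c {w i j t φ} : (i, j) ∈ C → StarDeriv V C CS R S w i t φ →
      StarDeriv V C CS R S w j t φ
  | vDis {a b i j t φ} : (i, j) ∈ V → R j a b → StarDeriv V C CS R S a i t φ →
      StarDeriv V C CS R S b i t φ

/-- Admissible evidence functions on a frame with relations R. -/
structure IsAEF {n : ℕ} (V C : Set (Fin n × Fin n)) (CS : Set (Fin n × Tm × Fml n))
    {W : Type} (R : Fin n → W → W → Prop) (A : Fin n → Tm → Fml n → Set W) : Prop where
  appClosure : ∀ (i : Fin n) (s t : Tm) (φ ψ : Fml n),
    A i s (.imp φ ψ) ∩ A i t φ ⊆ A i (.app s t) ψ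
  sumClosure : ∀ (i : Fin n) (s t : Tm) (φ : Fml n),
    A i t φ ∪ A i s φ ⊆ A i (.sum t s) φ
  csClosure : ∀ (i : Fin n) (t : Tm) (φ : Fml n), Cl CS i t φ → A i t φ = Set.univ
  vClosure : ∀ (i j : Fin n) (t : Tm) (φ : Fml n), (i, j) ∈ V →
    A i t φ ⊆ A j (.bang t) (.just i t φ)
  cClosure : ∀ (i j : Fin n) (t : Tm) (φ : Fml n), (i, j) ∈ C → A i t φ ⊆ A j t φ
  vDis : ∀ (i j : Fin n) (t : Tm) (φ : Fml n) (a b : W), (i, j) ∈ V →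
    R j a b → a ∈ A i t φ → b ∈ A i t φ

section Agents

variable {n : ℕ}

/-- Reflexive transitive closure of C, as a relation on agents. -/
def Cstar (C : Set (Fin n × Fin n)) : Fin n → Fin n → Prop :=
  Relation.ReflTransGen (fun i j => (i, j) ∈ C)

/-- S = agents requiring a serial relation. -/
def Sset (D F : Set (Fin n)) (C : Set (Fin n × Fin n)) : Set (Fin n) :=
  {i | ∃ j ∈ D ∪ F, Cstar C i j}

/-- R = agents requiring a reflexive relation. -/
def Rset (F : Set (Fin n)) (C : Set (Fin n × Fin n)) : Set (Fin n) :=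
  {i | ∃ j ∈ F, Cstar C i j}

/-- C_F = C together with the V-pairs from R into S. -/
def CF (D F : Set (Fin n)) (V C : Set (Fin n × Fin n)) (i j : Fin n) : Prop :=
  (i, j) ∈ C ∨ ((i, j) ∈ V ∧ i ∈ Rset F C ∧ j ∈ Sset D F C)

def CFstar (D F : Set (Fin n)) (V C : Set (Fin n × Fin n)) : Fin n → Fin n → Prop :=
  Relation.ReflTransGen (CF D F V C)

/-- ≡_C = C_F^* ∩ (C_F^*)⁻¹, restricted to S. -/
def eqC (D F : Set (Fin n)) (V C : Set (Fin n × Fin n)) (i j : Fin n) : Prop :=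
  i ∈ Sset D F C ∧ j ∈ Sset D F C ∧ CFstar D F V C i j ∧ CFstar D F V C j i

/-- Q = (V|_S ∪ C|_S)^*. -/
def Qrel (D F : Set (Fin n)) (V C : Set (Fin n × Fin n)) : Fin n → Fin n → Prop :=
  Relation.ReflTransGen
    (fun i j => ((i, j) ∈ V ∨ (i, j) ∈ C) ∧ i ∈ Sset D F C ∧ j ∈ Sset D F C)

/-- ≡_{VC} = Q ∩ Q⁻¹, restricted to S. -/
def eqVC (D F : Set (Fin n)) (V C : Set (Fin n × Fin n)) (i j : Fin n) : Prop :=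
  i ∈ Sset D F C ∧ j ∈ Sset D F C ∧ Qrel D F V C i j ∧ Qrel D F V C j i

/-- χ(i): the ≡_C-class of i. -/
def chi (D F : Set (Fin n)) (V C : Set (Fin n × Fin n)) (i : Fin n) : Set (Fin n) :=
  {j | eqC D F V C i j}

/-- P(i): the ≡_{VC}-class of i. -/
def Pcls (D F : Set (Fin n)) (V C : Set (Fin n × Fin n)) (i : Fin n) : Set (Fin n) :=
  {j | eqVC D F V C i j}

/-- P_C: the set of ≡_C-equivalence classes. -/
def PC (D F : Set (Fin n)) (V C : Set (Fin n × Fin n)) : Set (Set (Fin n)) :=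
  {L | ∃ i ∈ Sset D F C, L = chi D F V C i}

/-- ≤_C on classes. -/
def leC (D F : Set (Fin n)) (V C : Set (Fin n × Fin n)) (L₁ L₂ : Set (Fin n)) : Prop :=
  ∃ x ∈ L₁, ∃ y ∈ L₂, CFstar D F V C x y

/-- <_C on classes. -/
def ltC (D F : Set (Fin n)) (V C : Set (Fin n × Fin n)) (L₁ L₂ : Set (Fin n)) : Prop :=
  leC D F V C L₁ L₂ ∧ ¬ leC D F V C L₂ L₁

/-- M_C(L): ≤_C-maximal classes above L. -/
def MC (D F : Set (Fin n)) (V C : Set (Fin n × Fin n)) (L : Set (Fin n)) :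
    Set (Set (Fin n)) :=
  {L' | L' ∈ PC D F V C ∧ leC D F V C L L' ∧
    ¬ ∃ L'' ∈ PC D F V C, ltC D F V C L' L''}

/-- A V-class of agents: a ≡_{VC}-class containing a V-pair. -/
def IsVClass (D F : Set (Fin n)) (V C : Set (Fin n × Fin n)) (L : Set (Fin n)) : Prop :=
  (∃ i ∈ Sset D F C, L = Pcls D F V C i) ∧ ∃ x ∈ L, ∃ y ∈ L, (x, y) ∈ V

/-- The relation N: i ∈ N(j). -/
def Nrel (D F : Set (Fin n)) (V C : Set (Fin n × Fin n)) (i j : Fin n) : Prop :=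
  ∃ i' i'' : Fin n, i' ∈ Sset D F C \ Rset F C ∧ i'' ∈ Sset D F C \ Rset F C ∧
    eqVC D F V C i' i'' ∧ (∃ k, (i'', k) ∈ V ∧ CFstar D F V C k j) ∧
    chi D F V C i ∈ MC D F V C (chi D F V C i')

end Agents

/-- Size of a term. -/
def tsize : Tm → ℕ
  | .const _ => 1
  | .var _ => 1
  | .app s t => tsize s + tsize t + 1
  | .sum s t => tsize s + tsize t + 1
  | .bang t => tsize t + 1

/-- Size of a formula. -/
def fsize {n : ℕ} : Fml n → ℕ
  | .bot => 1
  | .atom _ => 1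
  | .imp φ ψ => fsize φ + fsize ψ + 1
  | .just _ t φ => tsize t + fsize φ + 1

/-- CS is axiomatically appropriate with respect to I. -/
def AxAppropriate {n : ℕ} (D F : Set (Fin n)) (V C : Set (Fin n × Fin n))
    (I : Set (Fin n)) (CS : Set (Fin n × Tm × Fml n)) : Prop :=
  ∀ i ∈ I, ∀ A : Fml n, IsAxiom D F V C A → ∃ c, (i, Tm.const c, A) ∈ CS

end JL

namespace JL

section Strings

variable {n : ℕ}

/-- The rewriting relation → on strings of agents. -/
inductive Rw (D F : Set (Fin n)) (V C : Set (Fin n × Fin n)) :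
    List (Fin n) → List (Fin n) → Prop
  | single {i j : Fin n} : CF D F V C j i → Rw D F V C [i] [j]
  | vee {i j : Fin n} : (j, i) ∈ V → Rw D F V C [i, j] [j]
  | ctx {β δ : List (Fin n)} (α γ : List (Fin n)) :
      Rw D F V C β δ → Rw D F V C (α ++ β ++ γ) (α ++ δ ++ γ)

/-- →*: reflexive transitive closure of →. -/
def RwStar (D F : Set (Fin n)) (V C : Set (Fin n × Fin n)) :
    List (Fin n) → List (Fin n) → Prop :=
  Relation.ReflTransGen (Rw D F V C)

/-- a R_{i₁} ⋯ R_{i_k} b : chain of accessibility steps along a string of agents. -/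
def RChain {W : Type} (R : Fin n → W → W → Prop) : List (Fin n) → W → W → Prop
  | [], a, b => a = b
  | i :: l, a, b => ∃ x, R i a x ∧ RChain R l x b

end Strings

section Tableau

variable {n : ℕ}

/-- Bodies of tableau formulas: a formula prefixed by a string of boxes,
or a star expression. -/
inductive TBody (n : ℕ) : Type
  | fml : List (Fin n) → Fml n → TBody n
  | star : Fin n → Tm → Fml n → TBody n

/-- A tableau formula: a world prefix (string of ≡_C-classes), a truth sign
and a body. -/
structure TF (n : ℕ) where
  pre : List (Set (Fin n))
  sign : Bool
  body : TBody n

/-- World prefixes appearing in a branch. -/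
def Wb (b : Set (TF n)) : Set (List (Set (Fin n))) :=
  {σ | ∃ s β, (⟨σ, s, β⟩ : TF n) ∈ b}

/-- A branch is propositionally closed if some σ T α and σ F α both occur. -/
def PropClosed (b : Set (TF n)) : Prop :=
  ∃ σ β, (⟨σ, true, β⟩ : TF n) ∈ b ∧ (⟨σ, false, β⟩ : TF n) ∈ b

/-- Closure of a branch under the tableau rules. -/
structure TClosed (D F : Set (Fin n)) (V C : Set (Fin n × Fin n)) (b : Set (TF n)) :
    Prop where
  trB : ∀ σ (i : Fin n) t ψ, i ∈ Sset D F C →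
    (⟨σ, true, .fml [] (.just i t ψ)⟩ : TF n) ∈ b →
    (⟨σ, true, .star i t ψ⟩ : TF n) ∈ b ∧ (⟨σ, true, .fml [i] ψ⟩ : TF n) ∈ b
  trD : ∀ σ (i j : Fin n) t ψ, i ∈ Sset D F C →
    chi D F V C j ∈ MC D F V C (chi D F V C i) → j ∉ Rset F C →
    (⟨σ, true, .fml [] (.just i t ψ)⟩ : TF n) ∈ b →
    (⟨σ ++ [chi D F V C j], false, .fml [] .bot⟩ : TF n) ∈ b
  tr : ∀ σ (i : Fin n) t ψ, i ∉ Sset D F C →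
    (⟨σ, true, .fml [] (.just i t ψ)⟩ : TF n) ∈ b →
    (⟨σ, true, .star i t ψ⟩ : TF n) ∈ b
  fa : ∀ σ (i : Fin n) t ψ,
    (⟨σ, false, .fml [] (.just i t ψ)⟩ : TF n) ∈ b →
    (⟨σ, false, .star i t ψ⟩ : TF n) ∈ b
  sRule : ∀ σ (i j : Fin n), Nrel D F V C i j →
    (⟨σ ++ [chi D F V C j], false, .fml [] .bot⟩ : TF n) ∈ b →
    (⟨σ ++ [chi D F V C j, chi D F V C i], false, .fml [] .bot⟩ : TF n) ∈ b
  sb : ∀ σ (i : Fin n) bs ψ,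
    (⟨σ, true, .fml (i :: bs) ψ⟩ : TF n) ∈ b → σ ++ [chi D F V C i] ∈ Wb b →
    (⟨σ ++ [chi D F V C i], true, .fml bs ψ⟩ : TF n) ∈ b
  fb : ∀ σ (i : Fin n) bs ψ, i ∈ F →
    (⟨σ, true, .fml (i :: bs) ψ⟩ : TF n) ∈ b → (⟨σ, true, .fml bs ψ⟩ : TF n) ∈ b
  cRule : ∀ σ (i j : Fin n) bs ψ, (i, j) ∈ C →
    (⟨σ, true, .fml (i :: bs) ψ⟩ : TF n) ∈ b → (⟨σ, true, .fml (j :: bs) ψ⟩ : TF n) ∈ b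
  vRule : ∀ σ (i j : Fin n) bs ψ, (i, j) ∈ V →
    (⟨σ, true, .fml (i :: bs) ψ⟩ : TF n) ∈ b →
    (⟨σ, true, .fml (j :: i :: bs) ψ⟩ : TF n) ∈ b
  impT : ∀ σ (ψ ψ' : Fml n),
    (⟨σ, true, .fml [] (.imp ψ ψ')⟩ : TF n) ∈ b →
    (⟨σ, false, .fml [] ψ⟩ : TF n) ∈ b ∨ (⟨σ, true, .fml [] ψ'⟩ : TF n) ∈ b
  impF : ∀ σ (ψ ψ' : Fml n),
    (⟨σ, false, .fml [] (.imp ψ ψ')⟩ : TF n) ∈ b →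
    (⟨σ, true, .fml [] ψ⟩ : TF n) ∈ b ∧ (⟨σ, false, .fml [] ψ'⟩ : TF n) ∈ b

/-- The accessibility relations of the frame 𝔉(b) constructed from a branch:
the closure of the base relations under the C- and V-frame conditions. -/
inductive FrameRel (D F : Set (Fin n)) (V C : Set (Fin n × Fin n)) (b : Set (TF n)) :
    Fin n → List (Set (Fin n)) → List (Set (Fin n)) → Prop
  | base {σ : List (Set (Fin n))} (i : Fin n) : σ ∈ Wb b →
      σ ++ [chi D F V C i] ∈ Wb b →
      FrameRel D F V C b i σ (σ ++ [chi D F V C i])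
  | refl {σ : List (Set (Fin n))} {i : Fin n} : i ∈ F → σ ∈ Wb b →
      FrameRel D F V C b i σ σ
  | stepC {σ τ : List (Set (Fin n))} {i j : Fin n} : (i, j) ∈ C →
      FrameRel D F V C b j σ τ → FrameRel D F V C b i σ τ
  | stepV {σ τ ρ : List (Set (Fin n))} {i j : Fin n} : (i, j) ∈ V →
      FrameRel D F V C b j σ τ → FrameRel D F V C b i τ ρ →
      FrameRel D F V C b i σ ρ

/-- T(b): the true star expressions of a branch. -/
def Tb (b : Set (TF n)) : Set (List (Set (Fin n)) × Fin n × Tm × Fml n) :=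
  {e | (⟨e.1, true, .star e.2.1 e.2.2.1 e.2.2.2⟩ : TF n) ∈ b}

/-- F(b): the false star expressions of a branch. -/
def Fb (b : Set (TF n)) : Set (List (Set (Fin n)) × Fin n × Tm × Fml n) :=
  {e | (⟨e.1, false, .star e.2.1 e.2.2.1 e.2.2.2⟩ : TF n) ∈ b}

end Tableau

/-- Subterm relation on justification terms. -/
inductive Subterm : Tm → Tm → Prop
  | refl (t : Tm) : Subterm t t
  | appL {s t u : Tm} : Subterm u s → Subterm u (.app s t)
  | appR {s t u : Tm} : Subterm u t → Subterm u (.app s t)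
  | sumL {s t u : Tm} : Subterm u s → Subterm u (.sum s t)
  | sumR {s t u : Tm} : Subterm u t → Subterm u (.sum s t)
  | bang {s u : Tm} : Subterm u s → Subterm u (.bang s)

/-- Terms of the form !⋯!c for a constant c. -/
inductive IsBangConst : Tm → Prop
  | const (c : ℕ) : IsBangConst (.const c)
  | bang {t : Tm} : IsBangConst t → IsBangConst (.bang t)

/-- The single-world *-calculus restricted to a set of allowed terms: every
expression occurring in the derivation has an allowed term. -/
inductive StarDeriv0R {n : ℕ} (V C : Set (Fin n × Fin n)) (CS : Set (Fin n × Tm × Fml n))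
    (good : Tm → Prop) : Fin n → Tm → Fml n → Prop
  | csAx {i t φ} : Cl CS i t φ → good t → StarDeriv0R V C CS good i t φ
  | app {i s t φ ψ} : good (Tm.app s t) → StarDeriv0R V C CS good i s (.imp φ ψ) →
      StarDeriv0R V C CS good i t φ → StarDeriv0R V C CS good i (.app s t) ψ
  | sumL {i s t φ} : good (Tm.sum s t) → StarDeriv0R V C CS good i t φ →
      StarDeriv0R V C CS good i (.sum s t) φ
  | sumR {i s t φ} : good (Tm.sum s t) → StarDeriv0R V C CS good i s φ →
      StarDeriv0R V C CS good i (.sum s t) φ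
  | v {i j t φ} : (i, j) ∈ V → good (Tm.bang t) → StarDeriv0R V C CS good i t φ →
      StarDeriv0R V C CS good j (.bang t) (.just i t φ)
  | c {i j t φ} : (i, j) ∈ C → StarDeriv0R V C CS good i t φ →
      StarDeriv0R V C CS good j t φ

/-- Purely propositional formulas. -/
inductive PFml : Type
  | bot : PFml
  | atom : ℕ → PFml
  | imp : PFml → PFml → PFml

/-- Evaluation of a propositional formula under a valuation. -/
def peval (v : ℕ → Prop) : PFml → Prop
  | .bot => False
  | .atom p => v p
  | .imp a c => peval v a → peval v c

/-- The forgetful projection erasing all justification operators. -/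
def proj {n : ℕ} : Fml n → PFml
  | .bot => .bot
  | .atom p => .atom p
  | .imp a c => .imp (proj a) (proj c)
  | .just _ _ a => proj a

end JL

namespace JL

/-- if σ T □_i φ appears in a complete branch b and σ R_i τ in
𝔉(b), then τ T φ appears in b. -/
theorem stmt18 {n : ℕ} (D F : Set (Fin n)) (V C : Set (Fin n × Fin n))
    (b : Set (TF n)) (hb : TClosed D F V C b)
    (σ τ : List (Set (Fin n))) (i : Fin n) (bs : List (Fin n)) (ψ : Fml n)
    (h1 : (⟨σ, true, .fml (i :: bs) ψ⟩ : TF n) ∈ b)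
    (h2 : FrameRel D F V C b i σ τ) :
    (⟨τ, true, .fml bs ψ⟩ : TF n) ∈ b := by
  -- Generalizing `bs` lets the `V` case carry `□_j □_i ψ` along the `j`-step,
  -- then `□_i ψ` along the `i`-step.
  induction h2 generalizing bs ψ with
  | base i _ hτ => exact hb.sb _ _ _ _ h1 hτ
  | refl hF _ => exact hb.fb _ _ _ _ hF h1
  | stepC hC _ ih => exact ih _ _ (hb.cRule _ _ _ _ _ hC h1)
  | stepV hV _ _ ihj ihi => exact ihi _ _ (ihj _ _ (hb.vRule _ _ _ _ _ hV h1))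
end JL
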